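/- arXiv:2502.00841 — 4 statements merged into one kernel-verified Lean document; each statement's English description precedes it below -/
import Mathlib

section
/- With g as above for Minimum Linear Arrangement, for all 1 ≤ i ≤ s < j ≤ n: g(i,j,σ) = g(i,s,σ) + g(s+1,j,σ) + cut(S(i,s), S(s+1,j)) + (s+1−i)·cut(L(i−1), S(s+1,j)) + (j−s)·cut(S(i,s), R(j+1)), where S(a,b) = {σ(a),…,σ(b)}, L(i−1) = {σ(1),…,σ(i−1)}, R(j+1) = {σ(j+1),…,σ(n)}, and cut(A,B) is the number of edges with one endpoint in A and the other in B. -/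
/-!
Every term of `g(i, j, σ)` belongs to a single edge and depends only on the positions `a < b` of
its endpoints, so the identity holds edge by edge, and for fixed positions it is a piecewise-linear
identity checked by locating `a` and `b` relative to `i ≤ s < j`. An edge with `i ≤ a ≤ s < b ≤ j`
is charged `s - a` and `b - (s + 1)` by the two halves and its missing unit by the middle cut; an
edge with `a < i` and `s < b ≤ j` is charged `b - (s + 1)` by the right half and the remaining
`s + 1 - i` by the left cut term; symmetrically on the right. All other edges are charged the same
amount by `[i, j]` as by the half they meet.
-/

/-- The partial objective `g(i,j,σ)` for Minimum Linear Arrangement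
(positions are 0-indexed values in `[i,j] ⊆ {0,…,n-1}`). -/
def mlaG (n : ℕ) (G : SimpleGraph (Fin n)) [DecidableRel G.Adj]
    (σ : Equiv.Perm (Fin n)) (i j : ℕ) : ℕ :=
  (∑ p ∈ Finset.univ.filter (fun p : Fin n × Fin n =>
      i ≤ (p.1 : ℕ) ∧ p.1 < p.2 ∧ (p.2 : ℕ) ≤ j ∧ G.Adj (σ p.1) (σ p.2)),
      ((p.2 : ℕ) - (p.1 : ℕ)))
  + (∑ p ∈ Finset.univ.filter (fun p : Fin n × Fin n =>
      (p.1 : ℕ) < i ∧ i ≤ (p.2 : ℕ) ∧ (p.2 : ℕ) ≤ j ∧ G.Adj (σ p.1) (σ p.2)),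
      ((p.2 : ℕ) - i))
  + (∑ p ∈ Finset.univ.filter (fun p : Fin n × Fin n =>
      i ≤ (p.1 : ℕ) ∧ (p.1 : ℕ) ≤ j ∧ j < (p.2 : ℕ) ∧ G.Adj (σ p.1) (σ p.2)),
      (j - (p.1 : ℕ)))

/-- Number of edges of `G` with one endpoint in `A` and the other in `B`
(`A` and `B` disjoint). -/
def mlaCut (n : ℕ) (G : SimpleGraph (Fin n)) [DecidableRel G.Adj]
    (A B : Finset (Fin n)) : ℕ :=
  ((A ×ˢ B).filter (fun p : Fin n × Fin n => G.Adj p.1 p.2)).card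

/-- Set of elements in positions `a..b`. -/
def posSet (n : ℕ) (σ : Equiv.Perm (Fin n)) (a b : ℕ) : Finset (Fin n) :=
  (Finset.univ.filter (fun t : Fin n => a ≤ (t : ℕ) ∧ (t : ℕ) ≤ b)).image σ

open Finset

def mlaCharge (i j a b : ℕ) : ℕ :=
  (if i ≤ a ∧ a < b ∧ b ≤ j then b - a else 0)
  + (if a < i ∧ i ≤ b ∧ b ≤ j then b - i else 0)
  + (if i ≤ a ∧ a ≤ j ∧ j < b then j - a else 0)

lemma mlaCharge_split {i s j : ℕ} (his : i ≤ s) (hsj : s < j) (a b : ℕ) :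
    mlaCharge i j a b = mlaCharge i s a b + mlaCharge (s + 1) j a b
      + (if (i ≤ a ∧ a ≤ s) ∧ s + 1 ≤ b ∧ b ≤ j then 1 else 0)
      + (if a < i ∧ s + 1 ≤ b ∧ b ≤ j then s + 1 - i else 0)
      + (if (i ≤ a ∧ a ≤ s) ∧ j < b then j - s else 0) := by
  have ha : a < i ∨ i ≤ a ∧ a ≤ s ∨ s < a ∧ a ≤ j ∨ j < a := by omega
  have hb : b < i ∨ i ≤ b ∧ b ≤ s ∨ s < b ∧ b ≤ j ∨ j < b := by omega
  unfold mlaCharge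
  rcases ha with ha | ha | ha | ha <;> rcases hb with hb | hb | hb | hb <;>
    rcases lt_or_ge a b with hab | hab <;>
    simp (disch := omega) only [if_pos, if_neg] <;> omega

section

variable {n : ℕ} (G : SimpleGraph (Fin n)) [DecidableRel G.Adj] (σ : Equiv.Perm (Fin n))

lemma mlaG_eq_sum_mlaCharge (i j : ℕ) :
    mlaG n G σ i j = ∑ p : Fin n × Fin n,
      if G.Adj (σ p.1) (σ p.2) then mlaCharge i j p.1 p.2 else 0 := by
  simp only [mlaG, mlaCharge, sum_filter, ← sum_add_distrib, Fin.lt_def]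
  refine sum_congr rfl fun p _ => ?_
  by_cases hadj : G.Adj (σ p.1) (σ p.2) <;> simp [hadj]

lemma mlaCut_image (A B : Finset (Fin n)) :
    mlaCut n G (A.image σ) (B.image σ) =
      ((A ×ˢ B).filter fun p => G.Adj (σ p.1) (σ p.2)).card := by
  refine card_nbij' (fun p => (σ.symm p.1, σ.symm p.2)) (fun p => (σ p.1, σ p.2)) ?_ ?_ ?_ ?_
  · rintro ⟨_, _⟩ hp
    simp only [coe_filter, mem_product, mem_image, Set.mem_ofPred_eq] at hp
    obtain ⟨⟨⟨a, ha, rfl⟩, ⟨b, hb, rfl⟩⟩, hadj⟩ := hp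
    simpa [ha, hb] using hadj
  · rintro ⟨a, b⟩ hp
    simp only [coe_filter, mem_product, mem_image, Set.mem_ofPred_eq] at hp ⊢
    exact ⟨⟨⟨a, hp.1.1, rfl⟩, b, hp.1.2, rfl⟩, hp.2⟩
  · intro p _; simp
  · intro p _; simp

lemma mlaCut_image_filter (PA PB : Fin n → Prop) [DecidablePred PA] [DecidablePred PB] :
    mlaCut n G ((univ.filter PA).image σ) ((univ.filter PB).image σ) =
      ∑ p : Fin n × Fin n,
        if G.Adj (σ p.1) (σ p.2) then (if PA p.1 ∧ PB p.2 then 1 else 0) else 0 := by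
  rw [mlaCut_image, card_filter, ← univ_product_univ, ← filter_product, sum_filter]
  exact sum_congr rfl fun p _ => by simp only [← ite_and, and_comm]

end

theorem stmt_8_general (n : ℕ) (G : SimpleGraph (Fin n)) [DecidableRel G.Adj]
    (σ : Equiv.Perm (Fin n)) (i s j : ℕ) (h1 : i ≤ s) (h2 : s < j) :
    mlaG n G σ i j =
      mlaG n G σ i s + mlaG n G σ (s + 1) j
      + mlaCut n G (posSet n σ i s) (posSet n σ (s + 1) j)
      + (s + 1 - i) * mlaCut n G
          ((Finset.univ.filter (fun t : Fin n => (t : ℕ) < i)).image σ)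
          (posSet n σ (s + 1) j)
      + (j - s) * mlaCut n G (posSet n σ i s)
          ((Finset.univ.filter (fun t : Fin n => j < (t : ℕ))).image σ) := by
  simp only [posSet, mlaCut_image_filter, mlaG_eq_sum_mlaCharge, mul_sum, ← sum_add_distrib]
  refine sum_congr rfl fun p _ => ?_
  by_cases hadj : G.Adj (σ p.1) (σ p.2)
  · simpa only [hadj, if_true, mul_ite, mul_one, mul_zero] using mlaCharge_split h1 h2 p.1 p.2
  · simp [hadj]

theorem stmt_8 (n : ℕ) (G : SimpleGraph (Fin n)) [DecidableRel G.Adj]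
    (σ : Equiv.Perm (Fin n)) (i s j : ℕ) (h1 : i ≤ s) (h2 : s < j) (h3 : j ≤ n - 1) :
    mlaG n G σ i j =
      mlaG n G σ i s + mlaG n G σ (s + 1) j
      + mlaCut n G (posSet n σ i s) (posSet n σ (s + 1) j)
      + (s + 1 - i) * mlaCut n G
          ((Finset.univ.filter (fun t : Fin n => (t : ℕ) < i)).image σ)
          (posSet n σ (s + 1) j)
      + (j - s) * mlaCut n G (posSet n σ i s)
          ((Finset.univ.filter (fun t : Fin n => j < (t : ℕ))).image σ) :=
  stmt_8_general n G σ i s j h1 h2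
end

section
/- In the graph G' constructed from a Permutation Clique instance G on t² vertices by adding diagonal vertices v_{ℓ,ℓ} for t < ℓ ≤ t' (each adjacent to all original vertices v_{i,j} with i,j ≤ t, and all diagonal vertices pairwise adjacent), there exists a permutation σ' of {1,…,t'} with {v'_{ℓ,σ'(ℓ)} : 1 ≤ ℓ ≤ t'} a clique in G' if and only if there exists a permutation σ of {1,…,t} with {v_{i,σ(i)} : 1 ≤ i ≤ t} a clique in G. -/
theorem stmt_10 (t t' : ℕ) (ht : t ≤ t')
    (G : SimpleGraph (Fin t × Fin t)) (G' : SimpleGraph (Fin t' × Fin t'))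
    (hAdj : ∀ a b : Fin t' × Fin t', G'.Adj a b ↔
      ((∃ (h1 : (a.1 : ℕ) < t) (h2 : (a.2 : ℕ) < t) (h3 : (b.1 : ℕ) < t) (h4 : (b.2 : ℕ) < t),
          G.Adj (⟨(a.1 : ℕ), h1⟩, ⟨(a.2 : ℕ), h2⟩) (⟨(b.1 : ℕ), h3⟩, ⟨(b.2 : ℕ), h4⟩)) ∨
        ((a.1 : ℕ) < t ∧ (a.2 : ℕ) < t ∧ t ≤ (b.1 : ℕ) ∧ b.1 = b.2) ∨
        (t ≤ (a.1 : ℕ) ∧ a.1 = a.2 ∧ (b.1 : ℕ) < t ∧ (b.2 : ℕ) < t) ∨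
        (t ≤ (a.1 : ℕ) ∧ a.1 = a.2 ∧ t ≤ (b.1 : ℕ) ∧ b.1 = b.2 ∧ a ≠ b))) :
    (∃ σ' : Equiv.Perm (Fin t'),
        ∀ l1 l2 : Fin t', l1 ≠ l2 → G'.Adj (l1, σ' l1) (l2, σ' l2)) ↔
    (∃ σ : Equiv.Perm (Fin t),
        ∀ i1 i2 : Fin t, i1 ≠ i2 → G.Adj (i1, σ i1) (i2, σ i2)) := by
  constructor
  · rintro ⟨σ', hσ'⟩
    by_cases ht1 : t ≤ 1
    · refine ⟨Equiv.refl _, fun i1 i2 hne => absurd ?_ hne⟩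
      have : (i1 : ℕ) < 1 := lt_of_lt_of_le i1.2 ht1
      have : (i2 : ℕ) < 1 := lt_of_lt_of_le i2.2 ht1
      apply Fin.ext; omega
    · push_neg at ht1
      have ht'2 : 2 ≤ t' := le_trans ht1 ht
      -- σ' maps small indices to small indices
      have hmap : ∀ l : Fin t', (l : ℕ) < t → (σ' l : ℕ) < t := by
        intro l hl
        have : ∃ l2 : Fin t', l2 ≠ l := by
          have : Nontrivial (Fin t') := Fin.nontrivial_iff_two_le.mpr ht'2
          exact exists_ne l
        obtain ⟨l2, hne⟩ := this
        have adj := hσ' l l2 (Ne.symm hne)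
        rw [hAdj] at adj
        rcases adj with ⟨_, h2, _, _, _⟩ | ⟨_, h2, _, _⟩ | ⟨h, _⟩ | ⟨h, _⟩
        · exact h2
        · exact h2
        · simp only at h; omega
        · simp only at h; omega
      set f : Fin t → Fin t := fun i =>
        ⟨σ' ⟨i, lt_of_lt_of_le i.2 ht⟩, hmap _ i.2⟩ with hf
      have hinj : Function.Injective f := by
        intro i1 i2 h
        have := congrArg (fun x : Fin t => (x : ℕ)) h
        simp only [hf] at this
        have := σ'.injective (Fin.ext this)
        have := congrArg (fun x : Fin t' => (x : ℕ)) this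
        exact Fin.ext this
      refine ⟨Equiv.ofBijective f (Finite.injective_iff_bijective.mp hinj), ?_⟩
      intro i1 i2 hne
      have hne' : (⟨i1, lt_of_lt_of_le i1.2 ht⟩ : Fin t') ≠ ⟨i2, lt_of_lt_of_le i2.2 ht⟩ := by
        intro h
        exact hne (Fin.ext (congrArg (fun x : Fin t' => (x : ℕ)) h))
      have adj := hσ' _ _ hne'
      rw [hAdj] at adj
      rcases adj with ⟨h1, h2, h3, h4, hadj⟩ | ⟨_, _, h3, _⟩ | ⟨h1, _⟩ | ⟨h1, _⟩
      · simp only [Equiv.ofBijective_apply, hf]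
        exact hadj
      · have := i2.2; simp only at h3; omega
      · have := i1.2; simp only at h1; omega
      · have := i1.2; simp only at h1; omega
  · rintro ⟨σ, hσ⟩
    set f : Fin t' → Fin t' := fun l =>
      if h : (l : ℕ) < t then ⟨σ ⟨l, h⟩, lt_of_lt_of_le (σ ⟨l, h⟩).2 ht⟩ else l with hf
    have hfsmall : ∀ l : Fin t', ∀ h : (l : ℕ) < t,
        f l = ⟨σ ⟨l, h⟩, lt_of_lt_of_le (σ ⟨l, h⟩).2 ht⟩ := by
      intro l h; simp only [hf, dif_pos h]
    have hfbig : ∀ l : Fin t', t ≤ (l : ℕ) → f l = l := by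
      intro l h; simp only [hf, dif_neg (not_lt.mpr h)]
    have hinj : Function.Injective f := by
      intro l1 l2 h
      by_cases h1 : (l1 : ℕ) < t <;> by_cases h2 : (l2 : ℕ) < t
      · rw [hfsmall l1 h1, hfsmall l2 h2] at h
        have : σ ⟨l1, h1⟩ = σ ⟨l2, h2⟩ :=
          Fin.ext (congrArg (fun x : Fin t' => (x : ℕ)) h)
        have := σ.injective this
        exact Fin.ext (congrArg (fun x : Fin t => (x : ℕ)) this)
      · rw [hfsmall l1 h1, hfbig l2 (not_lt.mp h2)] at h
        have := congrArg (fun x : Fin t' => (x : ℕ)) h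
        simp only at this
        have := (σ ⟨l1, h1⟩).2
        omega
      · rw [hfbig l1 (not_lt.mp h1), hfsmall l2 h2] at h
        have := congrArg (fun x : Fin t' => (x : ℕ)) h
        simp only at this
        have := (σ ⟨l2, h2⟩).2
        omega
      · rwa [hfbig l1 (not_lt.mp h1), hfbig l2 (not_lt.mp h2)] at h
    refine ⟨Equiv.ofBijective f (Finite.injective_iff_bijective.mp hinj), ?_⟩
    intro l1 l2 hne
    rw [hAdj]
    simp only [Equiv.ofBijective_apply]
    by_cases h1 : (l1 : ℕ) < t <;> by_cases h2 : (l2 : ℕ) < t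
    · left
      have hv1 : ((f l1 : Fin t') : ℕ) = (σ ⟨l1, h1⟩ : ℕ) := by rw [hfsmall l1 h1]
      have hv2 : ((f l2 : Fin t') : ℕ) = (σ ⟨l2, h2⟩ : ℕ) := by rw [hfsmall l2 h2]
      refine ⟨h1, by rw [hv1]; exact (σ ⟨l1, h1⟩).2, h2,
        by rw [hv2]; exact (σ ⟨l2, h2⟩).2, ?_⟩
      have hne' : (⟨l1, h1⟩ : Fin t) ≠ ⟨l2, h2⟩ := by
        intro h; exact hne (Fin.ext (congrArg (fun x : Fin t => (x : ℕ)) h))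
      convert hσ _ _ hne' using 2 <;>
        simp [Prod.ext_iff, Fin.ext_iff, hv1, hv2]
    · right; left
      rw [hfsmall l1 h1, hfbig l2 (not_lt.mp h2)]
      exact ⟨h1, (σ ⟨l1, h1⟩).2, not_lt.mp h2, rfl⟩
    · right; right; left
      rw [hfbig l1 (not_lt.mp h1), hfsmall l2 h2]
      exact ⟨not_lt.mp h1, rfl, h2, (σ ⟨l2, h2⟩).2⟩
    · right; right; right
      rw [hfbig l1 (not_lt.mp h1), hfbig l2 (not_lt.mp h2)]
      refine ⟨not_lt.mp h1, rfl, not_lt.mp h2, rfl, ?_⟩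
      intro h
      exact hne (congrArg Prod.fst h)
end

section
/- Keyword auction welfare with window size c is c-local: defining Q_i(π) = 1 − (1−q_i)·∏_{ℓ=max(π(i)−c,1)}^{π(i)−1} (1 − q_{π⁻¹(ℓ)}·w_{π⁻¹(ℓ),i}(π(i)−ℓ)), the social welfare Σ_i v_i·λ_{π(i)}·Q_i(π) can be written as Σ_{p=1}^{n} cost(a_{π⁻¹(p−c)},…,a_{π⁻¹(p)}) for a cost function depending only on the (at most) c+1 consecutive ads at positions p−c,…,p. -/
/-- The welfare contributed by the ad in slot `p` when slot `t` holds ad `f t`. -/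
noncomputable def slotWelfare {α : Type*} {n : ℕ} (c : ℕ) (v q : α → ℝ) (lam : Fin n → ℝ)
    (w : α → α → ℕ → ℝ) (f : ℕ → α) (p : ℕ) : ℝ :=
  if h : p < n then
    v (f p) * lam ⟨p, h⟩ *
      (1 - (1 - q (f p)) * ∏ l ∈ Finset.Ico (p - c) p, (1 - q (f l) * w (f l) (f p) (p - l)))
  else 0

section

variable {α : Type*} {n : ℕ} (c : ℕ) (v q : α → ℝ) (lam : Fin n → ℝ) (w : α → α → ℕ → ℝ)

theorem slotWelfare_congr {f g : ℕ → α} {p : ℕ}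
    (hfg : ∀ t, p - c ≤ t → t ≤ p → f t = g t) :
    slotWelfare c v q lam w f p = slotWelfare c v q lam w g p := by
  have hp : f p = g p := hfg p (Nat.sub_le p c) le_rfl
  have hwindow : ∀ l ∈ Finset.Ico (p - c) p, f l = g l := fun l hl =>
    hfg l (Finset.mem_Ico.mp hl).1 (Finset.mem_Ico.mp hl).2.le
  unfold slotWelfare
  rw [hp, Finset.prod_congr rfl fun l hl => by rw [hwindow l hl]]

theorem slotWelfare_of_eqOn {f : ℕ → α} {σ : Fin n → α} (hf : ∀ t (ht : t < n), f t = σ ⟨t, ht⟩)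
    (p : Fin n) :
    slotWelfare c v q lam w f p =
      v (σ p) * lam p * (1 - (1 - q (σ p)) *
        ∏ l ∈ (Finset.Ico ((p : ℕ) - c) p).attach,
          (1 - q (σ ⟨l.1, (Finset.mem_Ico.mp l.2).2.trans p.isLt⟩) *
            w (σ ⟨l.1, (Finset.mem_Ico.mp l.2).2.trans p.isLt⟩) (σ p) (p - l.1))) := by
  rw [slotWelfare, dif_pos p.isLt, hf p p.isLt, ← Finset.prod_attach]
  congr 3
  refine Finset.prod_congr rfl fun l _ => ?_
  rw [hf l ((Finset.mem_Ico.mp l.2).2.trans p.isLt)]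

end

theorem stmt_16 (n c : ℕ) (hn : 0 < n)
    (v : Fin n → ℝ) (q : Fin n → ℝ) (lam : Fin n → ℝ)
    (w : Fin n → Fin n → ℕ → ℝ) :
    ∃ cost : (ℕ → Fin n) → ℕ → ℝ,
      (∀ f g : ℕ → Fin n, ∀ p : ℕ,
          (∀ t : ℕ, p - c ≤ t → t ≤ p → f t = g t) → cost f p = cost g p) ∧
      ∀ π : Equiv.Perm (Fin n),
        (∑ i : Fin n, v i * lam (π i) *
          (1 - (1 - q i) *
            ∏ l ∈ (Finset.Ico ((π i : ℕ) - c) (π i : ℕ)).attach,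
              (1 - q (π.symm ⟨l.1, lt_trans (Finset.mem_Ico.mp l.2).2 (π i).isLt⟩) *
                w (π.symm ⟨l.1, lt_trans (Finset.mem_Ico.mp l.2).2 (π i).isLt⟩) i
                  ((π i : ℕ) - l.1))))
        = ∑ p : Fin n,
            cost (fun t => π.symm ⟨min t (n - 1),
              Nat.lt_of_le_of_lt (Nat.min_le_right t (n - 1)) (Nat.sub_lt hn one_pos)⟩)
              (p : ℕ) := by
  refine ⟨slotWelfare c v q lam w, fun f g p => slotWelfare_congr c v q lam w, fun π => ?_⟩
  refine Fintype.sum_equiv π _ _ fun i => ?_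
  rw [slotWelfare_of_eqOn c v q lam w (σ := π.symm) (fun t ht => ?_), Equiv.symm_apply_apply]
  exact congrArg π.symm (Fin.ext (min_eq_left (Nat.le_sub_one_of_lt ht)))
end

section
/- If a (minimization) permutation problem P satisfies the decomposition property with functions g and h, then for any permutation σ and any i ≤ s < j, the restriction σ(i,j) minimizes g(i,j,L,R,·) over permutations of the set S(i,j) only if, fixing the partition of S(i,j) into S(i,s) and S(s+1,j), the restrictions σ(i,s) and σ(s+1,j) minimize the corresponding left-call and right-call values g(i,s,L, R∪S(s+1,j),·) and g(s+1,j, L∪S(i,s), R,·) respectively (principle of optimality). -/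
/-!
Optimality is inherited by both halves through an exchange argument. Splice a competitor `τ` for
the left half into `σ`, keeping `σ` on the right half. The element sets `S(i,s)` and `S(s+1,j)`
stay the same, so by the decomposition property the only term of `g(i,j,·)` that changes is the
left call, and it changes by exactly `g_left(τ) - g_left(σ)`. Optimality of `σ(i,j)` makes that
difference nonnegative. The right half is symmetric.
-/

open Finset

section Splice

variable {ι α : Type*} [DecidableEq α] {I K : Finset ι} [∀ t, Decidable (t ∈ I)] {τ σ : ι → α}

lemma Finset.image_piecewise_self : I.image (I.piecewise τ σ) = I.image τ :=
  image_congr fun _ ht => piecewise_eq_of_mem _ _ _ ht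

lemma Finset.image_piecewise_of_disjoint (hIK : Disjoint I K) :
    K.image (I.piecewise τ σ) = K.image σ :=
  image_congr fun _ ht => piecewise_eq_of_notMem _ _ _ (disjoint_right.mp hIK ht)

lemma Finset.image_piecewise_of_subset [DecidableEq ι] (hIK : I ⊆ K)
    (himg : I.image τ = I.image σ) : K.image (I.piecewise τ σ) = K.image σ := by
  rw [← union_sdiff_of_subset hIK, image_union, image_union, image_piecewise_self, himg,
    image_piecewise_of_disjoint disjoint_sdiff]

end Splice

lemma Nat.disjoint_Icc_Icc_add_one (i s j : ℕ) : Disjoint (Icc i s) (Icc (s + 1) j) :=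
  disjoint_left.mpr fun t ht ht' => by simp only [mem_Icc] at ht ht'; omega

section Decomposition

variable {α : Type*}

def IsLocalCost (g : ℕ → ℕ → Finset α → Finset α → (ℕ → α) → ℝ) : Prop :=
  ∀ i j L R (τ τ' : ℕ → α),
    (∀ t, i ≤ t → t ≤ j → τ t = τ' t) → g i j L R τ = g i j L R τ'

variable [DecidableEq α]

def HasDecompositionProperty (g : ℕ → ℕ → Finset α → Finset α → (ℕ → α) → ℝ)
    (h : Finset α → Finset α → Finset α → Finset α → ℝ) : Prop :=
  ∀ i s j L R (τ : ℕ → α), i ≤ s → s < j →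
    g i j L R τ =
      g i s L (R ∪ (Icc (s + 1) j).image τ) τ
      + g (s + 1) j (L ∪ (Icc i s).image τ) R τ
      + h L R ((Icc i s).image τ) ((Icc (s + 1) j).image τ)

namespace HasDecompositionProperty

variable {g : ℕ → ℕ → Finset α → Finset α → (ℕ → α) → ℝ}
  {h : Finset α → Finset α → Finset α → Finset α → ℝ} {i s j : ℕ} {L R : Finset α}
  {σ τ : ℕ → α}

theorem cost_piecewise_left (hdec : HasDecompositionProperty g h) (hloc : IsLocalCost g)
    (his : i ≤ s) (hsj : s < j) (himg : (Icc i s).image τ = (Icc i s).image σ) :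
    g i j L R ((Icc i s).piecewise τ σ) =
      g i j L R σ + (g i s L (R ∪ (Icc (s + 1) j).image σ) τ
        - g i s L (R ∪ (Icc (s + 1) j).image σ) σ) := by
  have hdisj := Nat.disjoint_Icc_Icc_add_one i s j
  have hleft : g i s L (R ∪ (Icc (s + 1) j).image σ) ((Icc i s).piecewise τ σ) =
      g i s L (R ∪ (Icc (s + 1) j).image σ) τ :=
    hloc _ _ _ _ _ _ fun t hit hts => piecewise_eq_of_mem _ _ _ (mem_Icc.mpr ⟨hit, hts⟩)
  have hright : g (s + 1) j (L ∪ (Icc i s).image σ) R ((Icc i s).piecewise τ σ) =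
      g (s + 1) j (L ∪ (Icc i s).image σ) R σ :=
    hloc _ _ _ _ _ _ fun t hst htj =>
      piecewise_eq_of_notMem _ _ _ (disjoint_right.mp hdisj (mem_Icc.mpr ⟨hst, htj⟩))
  rw [hdec i s j L R ((Icc i s).piecewise τ σ) his hsj, hdec i s j L R σ his hsj,
    image_piecewise_self, himg, image_piecewise_of_disjoint hdisj, hleft, hright]
  ring

theorem cost_piecewise_right (hdec : HasDecompositionProperty g h) (hloc : IsLocalCost g)
    (his : i ≤ s) (hsj : s < j)
    (himg : (Icc (s + 1) j).image τ = (Icc (s + 1) j).image σ) :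
    g i j L R ((Icc (s + 1) j).piecewise τ σ) =
      g i j L R σ + (g (s + 1) j (L ∪ (Icc i s).image σ) R τ
        - g (s + 1) j (L ∪ (Icc i s).image σ) R σ) := by
  have hdisj := (Nat.disjoint_Icc_Icc_add_one i s j).symm
  have hleft : g i s L (R ∪ (Icc (s + 1) j).image σ) ((Icc (s + 1) j).piecewise τ σ) =
      g i s L (R ∪ (Icc (s + 1) j).image σ) σ :=
    hloc _ _ _ _ _ _ fun t hit hts =>
      piecewise_eq_of_notMem _ _ _ (disjoint_right.mp hdisj (mem_Icc.mpr ⟨hit, hts⟩))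
  have hright : g (s + 1) j (L ∪ (Icc i s).image σ) R ((Icc (s + 1) j).piecewise τ σ) =
      g (s + 1) j (L ∪ (Icc i s).image σ) R τ :=
    hloc _ _ _ _ _ _ fun t hst htj => piecewise_eq_of_mem _ _ _ (mem_Icc.mpr ⟨hst, htj⟩)
  rw [hdec i s j L R ((Icc (s + 1) j).piecewise τ σ) his hsj, hdec i s j L R σ his hsj,
    image_piecewise_self, himg, image_piecewise_of_disjoint hdisj, hleft, hright]
  ring

end HasDecompositionProperty

end Decomposition

theorem stmt_17 {α : Type*} [DecidableEq α]
    (g : ℕ → ℕ → Finset α → Finset α → (ℕ → α) → ℝ)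
    (h : Finset α → Finset α → Finset α → Finset α → ℝ)
    -- `g i j L R τ` depends only on the sub-permutation `τ(i,j)`
    (hloc : ∀ i j L R (τ τ' : ℕ → α),
        (∀ t, i ≤ t → t ≤ j → τ t = τ' t) → g i j L R τ = g i j L R τ')
    -- the decomposition property
    (hdec : ∀ i s j L R (τ : ℕ → α), i ≤ s → s < j →
        g i j L R τ =
          g i s L (R ∪ (Finset.Icc (s + 1) j).image τ) τ
          + g (s + 1) j (L ∪ (Finset.Icc i s).image τ) R τ
          + h L R ((Finset.Icc i s).image τ) ((Finset.Icc (s + 1) j).image τ))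
    (i s j : ℕ) (L R : Finset α) (σ : ℕ → α) (his : i ≤ s) (hsj : s < j)
    -- `σ(i,j)` minimizes `g(i,j,L,R,·)` over arrangements of the same element set
    (hopt : ∀ τ : ℕ → α, (Finset.Icc i j).image τ = (Finset.Icc i j).image σ →
        g i j L R σ ≤ g i j L R τ) :
    -- left call optimality
    (∀ τ : ℕ → α, (Finset.Icc i s).image τ = (Finset.Icc i s).image σ →
        g i s L (R ∪ (Finset.Icc (s + 1) j).image σ) σ ≤
          g i s L (R ∪ (Finset.Icc (s + 1) j).image σ) τ) ∧
    -- right call optimality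
    (∀ τ : ℕ → α, (Finset.Icc (s + 1) j).image τ = (Finset.Icc (s + 1) j).image σ →
        g (s + 1) j (L ∪ (Finset.Icc i s).image σ) R σ ≤
          g (s + 1) j (L ∪ (Finset.Icc i s).image σ) R τ) := by
  have hdec' : HasDecompositionProperty g h := hdec
  refine ⟨fun τ himg => ?_, fun τ himg => ?_⟩
  · have hle := hopt _ (image_piecewise_of_subset (Icc_subset_Icc le_rfl hsj.le) himg)
    rw [hdec'.cost_piecewise_left hloc his hsj himg] at hle
    linarith
  · have hle := hopt _ (image_piecewise_of_subset (Icc_subset_Icc (by omega) le_rfl) himg)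
    rw [hdec'.cost_piecewise_right hloc his hsj himg] at hle
    linarith
end
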